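/- arXiv:2210.06098 — 2 statements merged into one kernel-verified Lean document; each statement's English description precedes it below -/
import Mathlib

section
/- Let μ ∈ ℝ^d be a unit vector and let A : ℝ^d → ℝ^d be an invertible linear map with operator norm ‖A‖_op ≤ 1 that maps the hyperplane μ^⊥ into itself. Define 𝒢(y) = Exp_μ(A(Log_μ(y))) and 𝒢⁻¹(y) = Exp_μ(A⁻¹(Log_μ(y))) for unit vectors y ≠ −μ. Then for every unit vector y with y ≠ −μ, 𝒢⁻¹(𝒢(y)) = y. -/
/-! Log and Exp are mutually inverse between the sphere minus `-μ` and the open ball of radius `π`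
in `μ^⊥`. Since `A` preserves `μ^⊥` and does not increase norms, `A (Log_μ y)` stays in that
ball, so `Log_μ (Exp_μ (A (Log_μ y))) = A (Log_μ y)`; applying `A⁻¹` and then `Exp_μ` gives
back `y`. -/

open scoped RealInnerProductSpace

/-- The Riemannian exponential map of the unit sphere at `μ`:
`Exp_μ(v) = cos(‖v‖)·μ + (sin(‖v‖)/‖v‖)·v`, with `Exp_μ(0) = μ`. -/
noncomputable def ExpMap {d : ℕ} (μ v : EuclideanSpace ℝ (Fin d)) :
    EuclideanSpace ℝ (Fin d) :=
  Real.cos ‖v‖ • μ + (Real.sin ‖v‖ / ‖v‖) • v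

/-- The Riemannian logarithmic map of the unit sphere at `μ`:
`Log_μ(x) = (θ/sin θ)·(x − ⟪x,μ⟫·μ)` with `θ = arccos ⟪x,μ⟫`, and `Log_μ(μ) = 0`. -/
noncomputable def LogMap {d : ℕ} (μ x : EuclideanSpace ℝ (Fin d)) :
    EuclideanSpace ℝ (Fin d) :=
  (Real.arccos ⟪x, μ⟫ / Real.sin (Real.arccos ⟪x, μ⟫)) • (x - ⟪x, μ⟫ • μ)

open Real

section UnitVectors

variable {F : Type*} [NormedAddCommGroup F] [InnerProductSpace ℝ F] {x μ : F}

theorem neg_one_lt_real_inner_of_norm_eq_one (hx : ‖x‖ = 1) (hμ : ‖μ‖ = 1) (hxμ : x ≠ -μ) :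
    -1 < ⟪x, μ⟫ :=
  (neg_one_le_real_inner_of_norm_eq_one hx hμ).lt_of_ne
    fun h => hxμ ((inner_eq_neg_one_iff_of_norm_eq_one hx hμ).1 h.symm)

theorem norm_sub_real_inner_smul_eq_sin_arccos (hx : ‖x‖ = 1) (hμ : ‖μ‖ = 1) :
    ‖x - ⟪x, μ⟫ • μ‖ = sin (arccos ⟪x, μ⟫) := by
  rw [sin_arccos, ← sqrt_sq (norm_nonneg _), norm_sub_sq_real, norm_smul, real_inner_smul_right,
    real_inner_comm, hx, hμ, Real.norm_eq_abs, mul_pow, sq_abs]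
  ring_nf

end UnitVectors

section ExpLog

variable {d : ℕ} {μ x v : EuclideanSpace ℝ (Fin d)}

theorem real_inner_expMap (hμ : ‖μ‖ = 1) (hv : ⟪v, μ⟫ = 0) : ⟪ExpMap μ v, μ⟫ = cos ‖v‖ := by
  rw [ExpMap, inner_add_left, real_inner_smul_left, real_inner_smul_left,
    real_inner_self_eq_norm_sq, hμ, hv]
  ring

theorem real_inner_logMap (hμ : ‖μ‖ = 1) (x : EuclideanSpace ℝ (Fin d)) :
    ⟪LogMap μ x, μ⟫ = 0 := by
  rw [LogMap, real_inner_smul_left, inner_sub_left, real_inner_smul_left,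
    real_inner_self_eq_norm_sq, hμ]
  ring

theorem norm_logMap (hμ : ‖μ‖ = 1) (hx : ‖x‖ = 1) (hxμ : x ≠ -μ) :
    ‖LogMap μ x‖ = arccos ⟪x, μ⟫ := by
  have hlt : arccos ⟪x, μ⟫ < π :=
    arccos_lt_pi.2 (neg_one_lt_real_inner_of_norm_eq_one hx hμ hxμ)
  rw [LogMap, norm_smul, norm_sub_real_inner_smul_eq_sin_arccos hx hμ, Real.norm_eq_abs]
  rcases eq_or_ne (sin (arccos ⟪x, μ⟫)) 0 with hsin | hsin
  · rw [hsin, mul_zero, eq_comm]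
    exact (sin_eq_zero_iff_of_lt_of_lt (by linarith [arccos_nonneg ⟪x, μ⟫]) hlt).1 hsin
  · have hpos : 0 < sin (arccos ⟪x, μ⟫) :=
      (sin_nonneg_of_nonneg_of_le_pi (arccos_nonneg _) hlt.le).lt_of_ne' hsin
    rw [abs_of_nonneg (div_nonneg (arccos_nonneg _) hpos.le), div_mul_cancel₀ _ hsin]

theorem norm_logMap_lt_pi (hμ : ‖μ‖ = 1) (hx : ‖x‖ = 1) (hxμ : x ≠ -μ) :
    ‖LogMap μ x‖ < π := by
  rw [norm_logMap hμ hx hxμ]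
  exact arccos_lt_pi.2 (neg_one_lt_real_inner_of_norm_eq_one hx hμ hxμ)

theorem logMap_expMap (hμ : ‖μ‖ = 1) (hv : ⟪v, μ⟫ = 0) (hvπ : ‖v‖ < π) :
    LogMap μ (ExpMap μ v) = v := by
  have hsub : ExpMap μ v - cos ‖v‖ • μ = (sin ‖v‖ / ‖v‖) • v := by
    rw [ExpMap]; module
  rw [LogMap, real_inner_expMap hμ hv, arccos_cos (norm_nonneg v) hvπ.le, hsub, smul_smul]
  rcases eq_or_ne v 0 with rfl | hv0
  · rw [smul_zero]
  · have hpos : 0 < ‖v‖ := norm_pos_iff.2 hv0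
    have hsin : sin ‖v‖ ≠ 0 := (sin_pos_of_pos_of_lt_pi hpos hvπ).ne'
    rw [div_mul_div_cancel₀ hsin, div_self hpos.ne', one_smul]

theorem expMap_logMap (hμ : ‖μ‖ = 1) (hx : ‖x‖ = 1) (hxμ : x ≠ -μ) :
    ExpMap μ (LogMap μ x) = x := by
  have hcos : cos (arccos ⟪x, μ⟫) = ⟪x, μ⟫ :=
    cos_arccos (neg_one_le_real_inner_of_norm_eq_one hx hμ)
      (real_inner_le_one_of_norm_eq_one hx hμ)
  rw [ExpMap, norm_logMap hμ hx hxμ, hcos, LogMap, smul_smul]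
  rcases eq_or_ne (sin (arccos ⟪x, μ⟫)) 0 with hsin | hsin
  · have hxc : x - ⟪x, μ⟫ • μ = 0 := by
      rw [← norm_eq_zero, norm_sub_real_inner_smul_eq_sin_arccos hx hμ, hsin]
    rw [hxc, smul_zero, add_zero, ← sub_eq_zero, ← neg_sub, hxc, neg_zero]
  · have harc : arccos ⟪x, μ⟫ ≠ 0 := fun h => hsin (by rw [h, sin_zero])
    rw [div_mul_div_cancel₀ harc, div_self hsin, one_smul, add_sub_cancel]

end ExpLog

/-- For an invertible linear map `A` with operator norm at most `1` mapping `μ^⊥` into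
itself, the map `𝒢(y) = Exp_μ(A(Log_μ(y)))` has the left inverse
`𝒢⁻¹(y) = Exp_μ(A⁻¹(Log_μ(y)))` on `S^{d-1}\{−μ}`. -/
theorem mahalanobis_transform_left_inverse {d : ℕ}
    (μ : EuclideanSpace ℝ (Fin d)) (hμ : ‖μ‖ = 1)
    (A : EuclideanSpace ℝ (Fin d) ≃L[ℝ] EuclideanSpace ℝ (Fin d))
    (hAnorm : ‖(A : EuclideanSpace ℝ (Fin d) →L[ℝ] EuclideanSpace ℝ (Fin d))‖ ≤ 1)
    (hA : ∀ v : EuclideanSpace ℝ (Fin d), ⟪v, μ⟫ = 0 → ⟪A v, μ⟫ = 0)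
    (y : EuclideanSpace ℝ (Fin d)) (hy : ‖y‖ = 1) (hyμ : y ≠ -μ) :
    ExpMap μ (A.symm (LogMap μ (ExpMap μ (A (LogMap μ y))))) = y := by
  have hAv_lt : ‖A (LogMap μ y)‖ < π :=
    calc ‖A (LogMap μ y)‖ ≤ 1 * ‖LogMap μ y‖ :=
          (A : EuclideanSpace ℝ (Fin d) →L[ℝ] EuclideanSpace ℝ (Fin d)).le_of_opNorm_le hAnorm _
      _ < π := by rw [one_mul]; exact norm_logMap_lt_pi hμ hy hyμ
  rw [logMap_expMap hμ (hA _ (real_inner_logMap hμ y)) hAv_lt, A.symm_apply_apply,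
    expMap_logMap hμ hy hyμ]
end

section
/- Let μ ∈ ℝ^d be a unit vector and let A : ℝ^d → ℝ^d be a linear map with operator norm ‖A‖_op ≤ 1 that maps the hyperplane μ^⊥ into itself. Then the Mahalanobis transformation with normalized matrix does not decrease concentration around μ: for every unit vector y with y ≠ −μ, ⟪Exp_μ(A(Log_μ(y))), μ⟫ ≥ ⟪y, μ⟫. -/
open scoped RealInnerProductSpace

/-- The Mahalanobis transformation with normalized matrix (operator norm at most `1`,
mapping `μ^⊥` into itself) does not decrease concentration around `μ`:
`⟪Exp_μ(A(Log_μ(y))), μ⟫ ≥ ⟪y, μ⟫`. -/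
theorem mahalanobis_transform_concentration {d : ℕ}
    (μ : EuclideanSpace ℝ (Fin d)) (hμ : ‖μ‖ = 1)
    (A : EuclideanSpace ℝ (Fin d) →L[ℝ] EuclideanSpace ℝ (Fin d))
    (hAnorm : ‖A‖ ≤ 1)
    (hA : ∀ v : EuclideanSpace ℝ (Fin d), ⟪v, μ⟫ = 0 → ⟪A v, μ⟫ = 0)
    (y : EuclideanSpace ℝ (Fin d)) (hy : ‖y‖ = 1) (hyμ : y ≠ -μ) :
    ⟪ExpMap μ (A (LogMap μ y)), μ⟫ ≥ ⟪y, μ⟫ := by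
  have hμ2 : ⟪μ, μ⟫ = 1 := by
    rw [real_inner_self_eq_norm_sq, hμ]; norm_num
  have hy2 : ⟪y, y⟫ = 1 := by
    rw [real_inner_self_eq_norm_sq, hy]; norm_num
  set t := ⟪y, μ⟫ with ht
  have ht1 : t ≤ 1 := by
    have := real_inner_le_norm y μ
    rw [hy, hμ] at this; linarith
  have htm1 : -1 < t := by
    rcases lt_or_eq_of_le (by
      have := abs_real_inner_le_norm y μ
      rw [hy, hμ] at this
      have := neg_abs_le t
      linarith : (-1 : ℝ) ≤ t) with h | h
    · exact h
    · exfalso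
      apply hyμ
      have hnμ : ‖(-μ : EuclideanSpace ℝ (Fin d))‖ = 1 := by rw [norm_neg, hμ]
      have : ⟪y, -μ⟫ = 1 := by rw [inner_neg_right]; linarith
      exact (inner_eq_one_iff_of_norm_eq_one hy hnμ).mp this
  set θ := Real.arccos t with hθ
  have hθcos : Real.cos θ = t := Real.cos_arccos (by linarith) ht1
  have hθsin : Real.sin θ = Real.sqrt (1 - t ^ 2) := by
    rw [hθ, Real.sin_arccos]
  have hθ0 : 0 ≤ θ := Real.arccos_nonneg t
  have hθπ : θ ≤ Real.pi := Real.arccos_le_pi t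
  -- the tangent vector is orthogonal to μ
  have hLperp : ⟪LogMap μ y, μ⟫ = 0 := by
    unfold LogMap
    rw [real_inner_smul_left, inner_sub_left, real_inner_smul_left, hμ2, ← ht]
    ring
  have hvμ : ⟪A (LogMap μ y), μ⟫ = 0 := hA _ hLperp
  -- norm of w = y - t • μ
  have hw : ‖y - t • μ‖ = Real.sqrt (1 - t ^ 2) := by
    have h1 : ⟪y - t • μ, y - t • μ⟫ = 1 - t ^ 2 := by
      rw [inner_sub_left, inner_sub_right, inner_sub_right, real_inner_smul_left,
        real_inner_smul_left, real_inner_smul_right, real_inner_smul_right,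
        hy2, hμ2]
      have hc : ⟪μ, y⟫ = t := by rw [real_inner_comm]
      rw [hc]; ring
    have h2 : ‖y - t • μ‖ ^ 2 = 1 - t ^ 2 := by
      rw [← real_inner_self_eq_norm_sq]; exact h1
    rw [← h2, Real.sqrt_sq (norm_nonneg _)]
  have hLog : ‖LogMap μ y‖ ≤ θ := by
    unfold LogMap
    rw [norm_smul, Real.norm_eq_abs, ← ht, ← hθ, hθsin, hw]
    rcases eq_or_lt_of_le ht1 with h1 | h1
    · have : (1 : ℝ) - t ^ 2 = 0 := by rw [h1]; ring
      rw [this, Real.sqrt_zero, mul_zero]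
      exact hθ0
    · have hpos : 0 < 1 - t ^ 2 := by nlinarith
      have hs : 0 < Real.sqrt (1 - t ^ 2) := Real.sqrt_pos.mpr hpos
      rw [abs_of_nonneg (div_nonneg hθ0 hs.le), div_mul_cancel₀ _ hs.ne']
  have hv : ‖A (LogMap μ y)‖ ≤ θ := by
    calc ‖A (LogMap μ y)‖ ≤ ‖A‖ * ‖LogMap μ y‖ := A.le_opNorm _
      _ ≤ 1 * θ := mul_le_mul hAnorm hLog (norm_nonneg _) zero_le_one
      _ = θ := one_mul θ
  have hexp : ⟪ExpMap μ (A (LogMap μ y)), μ⟫ = Real.cos ‖A (LogMap μ y)‖ := by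
    unfold ExpMap
    rw [inner_add_left, real_inner_smul_left, real_inner_smul_left, hμ2, hvμ]
    ring
  rw [hexp, ge_iff_le, ← hθcos]
  exact Real.cos_le_cos_of_nonneg_of_le_pi (norm_nonneg _) hθπ hv
end
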